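/- arXiv:2407.21208 — 2 statements merged into one kernel-verified Lean document; each statement's English description precedes it below -/
import Mathlib

section
/- Let $p$ be a prime with $p \equiv 1 \pmod 4$. Then the congruence $x^4 \equiv 2 \pmod p$ has an integer solution if and only if there exist natural numbers $x, y$ with $p = x^2 + 64y^2$. -/
/-!
Write `p = a² + b²` with `a` odd and `4 ∣ b`; this is possible once `p ≡ 1 mod 8`, which is forced
when `2` is a square mod `p`. Since `a² = -b²` in `𝔽_p`, we have `2ab = (a + b)²`, so
`2^((p-1)/4) (ab)^((p-1)/4) = ((a+b)/p)`. By reciprocity `(a/p) = (b²/a) = 1` and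
`((a+b)/p) = (2b²/(a+b)) = χ₈(a+b)`, while `(ab)^((p-1)/4) = (-1)^((p-1)/8) (a/p)` because
`(ab)² = -a⁴`. Reading the signs modulo `16` gives Dirichlet's `2^((p-1)/4) = (-1)^(b/4)`.
As `𝔽_p^×` is cyclic, `2` is a fourth power iff `2^((p-1)/4) = 1`, i.e. iff `8 ∣ b`.
-/

open ZMod

theorem IsCyclic.mem_range_powMonoidHom_iff {G : Type*} [CommGroup G] [IsCyclic G] [Finite G]
    {n : ℕ} (hn : n ∣ Nat.card G) {g : G} :
    g ∈ (powMonoidHom n : G →* G).range ↔ g ^ (Nat.card G / n) = 1 := by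
  have hle : (powMonoidHom n : G →* G).range ≤ (powMonoidHom (Nat.card G / n)).ker := by
    rintro _ ⟨x, rfl⟩
    simp only [MonoidHom.mem_ker, powMonoidHom_apply, ← pow_mul, Nat.mul_div_cancel' hn,
      pow_card_eq_one']
  have hcard : Nat.card (powMonoidHom (Nat.card G / n) : G →* G).ker ≤
      Nat.card (powMonoidHom n : G →* G).range := by
    rw [IsCyclic.card_powMonoidHom_ker, IsCyclic.card_powMonoidHom_range, Nat.gcd_eq_right hn,
      Nat.gcd_eq_right (Nat.div_dvd_of_dvd hn)]
  rw [Subgroup.eq_of_le_of_card_ge hle hcard, MonoidHom.mem_ker, powMonoidHom_apply]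

theorem FiniteField.exists_pow_eq_iff_pow_div_eq_one {K : Type*} [Field K] [Fintype K] {n : ℕ}
    (hn : n ∣ Fintype.card K - 1) {a : K} (ha : a ≠ 0) :
    (∃ x : K, x ^ n = a) ↔ a ^ ((Fintype.card K - 1) / n) = 1 := by
  classical
  have hcard : Nat.card Kˣ = Fintype.card K - 1 := by
    rw [Nat.card_eq_fintype_card, Fintype.card_units]
  rw [← hcard] at hn ⊢
  have key := IsCyclic.mem_range_powMonoidHom_iff hn (g := Units.mk0 a ha)
  rw [MonoidHom.mem_range, ← Units.val_eq_one, Units.val_pow_eq_pow_val, Units.val_mk0] at key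
  rw [← key]
  constructor
  · rintro ⟨x, rfl⟩
    have hn0 : n ≠ 0 := ne_zero_of_dvd_ne_zero Nat.card_pos.ne' hn
    have hx : x ≠ 0 := by rintro rfl; exact ha (zero_pow hn0)
    exact ⟨Units.mk0 x hx, by ext; simp⟩
  · rintro ⟨x, hx⟩
    exact ⟨x, by simpa using congrArg Units.val hx⟩

theorem exists_int_pow_modEq_iff (n m : ℕ) (a : ℤ) :
    (∃ x : ℤ, x ^ n ≡ a [ZMOD m]) ↔ ∃ x : ZMod m, x ^ n = a := by
  simp only [← ZMod.intCast_eq_intCast_iff]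
  constructor
  · rintro ⟨x, hx⟩
    exact ⟨x, by exact_mod_cast hx⟩
  · rintro ⟨x, hx⟩
    exact ⟨x.cast, by push_cast [ZMod.intCast_cast, ZMod.cast_id]; exact hx⟩

theorem ZMod.χ₈_add_four_mul (x : ZMod 8) (c : ℕ) : χ₈ (x + 4 * c) = (-1) ^ c * χ₈ x := by
  induction c with
  | zero => simp
  | succ c ih =>
    have hχ : ∀ y : ZMod 8, χ₈ (y + 4) = -χ₈ y := by decide
    rw [Nat.cast_succ, mul_add_one, ← add_assoc, hχ, ih, pow_succ]
    ring

theorem ZMod.χ₈_nat_eq_neg_one_pow {a : ℕ} (ha : Odd a) : χ₈ a = (-1) ^ ((a ^ 2 - 1) / 8) := by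
  -- both sides depend only on `a % 16`
  rw [χ₈_nat_mod_eight, neg_one_pow_eq_pow_mod_two]
  have ha2 : a % 2 = 1 := Nat.odd_iff.mp ha
  have hsq : a ^ 2 % 16 = (a % 16) ^ 2 % 16 := Nat.pow_mod a 2 16
  have hsq2 : a ^ 2 % 2 = 1 := by rw [Nat.pow_mod, ha2]
  rw [show a % 8 = a % 16 % 8 by omega,
    show (a ^ 2 - 1) / 8 % 2 = ((a % 16) ^ 2 % 16 - 1) / 8 by omega]
  have hr : a % 16 < 16 := Nat.mod_lt _ (by norm_num)
  have hr2 : a % 16 % 2 = 1 := by omega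
  generalize a % 16 = r at hr hr2
  revert r
  decide

theorem ZMod.χ₈_add_four_mul_mul_neg_one_pow {a : ℕ} (ha : Odd a) (c : ℕ) :
    χ₈ (a + 4 * c : ℕ) * (-1) ^ ((a ^ 2 + (4 * c) ^ 2 - 1) / 8) = (-1) ^ c := by
  have hexp : (a ^ 2 + (4 * c) ^ 2 - 1) / 8 = (a ^ 2 - 1) / 8 + 2 * c ^ 2 := by
    have := Nat.eight_dvd_sq_sub_one_of_odd ha
    have := Nat.one_le_pow 2 a ha.pos
    have : (4 * c) ^ 2 = 16 * c ^ 2 := by ring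
    omega
  have hsq : χ₈ a * χ₈ a = 1 := by
    rw [χ₈_nat_eq_neg_one_pow ha, ← pow_add, ← two_mul, pow_mul, neg_one_sq, one_pow]
  calc χ₈ (a + 4 * c : ℕ) * (-1) ^ ((a ^ 2 + (4 * c) ^ 2 - 1) / 8)
      = (-1) ^ c * χ₈ a * χ₈ a := by
        rw [hexp, pow_add, pow_mul, neg_one_sq, one_pow, mul_one, ← χ₈_nat_eq_neg_one_pow ha]
        push_cast
        rw [χ₈_add_four_mul]
    _ = (-1) ^ c := by rw [mul_assoc, hsq, mul_one]

theorem Nat.Prime.coprime_of_eq_sq_add_sq {p a b : ℕ} (hp : p.Prime) (h : p = a ^ 2 + b ^ 2) :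
    a.Coprime b := by
  have hdvd : a.gcd b * a.gcd b ∣ p := by
    rw [h, ← sq]
    exact dvd_add (pow_dvd_pow_of_dvd (a.gcd_dvd_left b) 2)
      (pow_dvd_pow_of_dvd (a.gcd_dvd_right b) 2)
  rcases (Nat.dvd_prime hp).mp hdvd with h1 | hsq
  · exact Nat.eq_one_of_mul_eq_one_right h1
  · rw [← hsq, Nat.prime_mul_iff] at hp
    exact hp.elim And.right And.right

section SumOfTwoSquares

variable {p a b : ℕ} [Fact p.Prime]

theorem legendreSym_eq_one_of_eq_sq_add_sq (h : p = a ^ 2 + b ^ 2) (ha : Odd a)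
    (hp4 : p % 4 = 1) : legendreSym p a = 1 := by
  have hcop := (Fact.out : p.Prime).coprime_of_eq_sq_add_sq h
  rw [jacobiSym.legendreSym.to_jacobiSym, jacobiSym.quadratic_reciprocity_one_mod_four' ha hp4,
    jacobiSym.mod_left' (a₂ := (b : ℤ) ^ 2)]
  · exact jacobiSym.sq_one' (by rw [Int.gcd_natCast_natCast]; exact hcop.symm)
  · rw [h]; push_cast
    rw [show (a : ℤ) ^ 2 + (b : ℤ) ^ 2 = (b : ℤ) ^ 2 + a * a by ring, Int.add_mul_emod_self_left]

theorem legendreSym_add_eq_χ₈_of_eq_sq_add_sq (h : p = a ^ 2 + b ^ 2) (hab : Odd (a + b))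
    (hp4 : p % 4 = 1) : legendreSym p (a + b : ℕ) = χ₈ (a + b : ℕ) := by
  have hcop : ((b : ℤ)).gcd ((a + b : ℕ) : ℤ) = 1 := by
    rw [Int.gcd_natCast_natCast, Nat.gcd_comm, Nat.gcd_add_self_left]
    exact ((Fact.out : p.Prime).coprime_of_eq_sq_add_sq h)
  rw [jacobiSym.legendreSym.to_jacobiSym, jacobiSym.quadratic_reciprocity_one_mod_four' hab hp4,
    jacobiSym.mod_left' (a₂ := 2 * (b : ℤ) ^ 2), jacobiSym.mul_left, jacobiSym.sq_one' hcop,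
    jacobiSym.at_two hab, mul_one]
  rw [h]; push_cast
  rw [show (a : ℤ) ^ 2 + (b : ℤ) ^ 2 = 2 * (b : ℤ) ^ 2 + (a + b) * (a - b) by ring,
    Int.add_mul_emod_self_left]

theorem two_pow_div_four_eq_χ₈_mul (h : p = a ^ 2 + b ^ 2) (ha : Odd a) (hb : 4 ∣ b) :
    (2 : ZMod p) ^ ((p - 1) / 4) = (χ₈ (a + b : ℕ) : ZMod p) * (-1) ^ ((p - 1) / 8) := by
  have h8 : 8 ∣ p - 1 := by
    obtain ⟨c, rfl⟩ := hb
    have := Nat.eight_dvd_sq_sub_one_of_odd ha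
    have hpos : 1 ≤ a ^ 2 := Nat.one_le_pow _ _ ha.pos
    have h16 : (4 * c) ^ 2 = 16 * c ^ 2 := by ring
    omega
  have hp2 := (Fact.out : p.Prime).two_le
  have hp4 : p % 4 = 1 := by omega
  have hA : (a : ZMod p) ^ (p / 2) = 1 := by
    have := legendreSym.eq_pow p a
    rw [legendreSym_eq_one_of_eq_sq_add_sq h ha hp4] at this
    exact_mod_cast this.symm
  have hAB : ((a : ZMod p) + b) ^ (p / 2) = χ₈ (a + b : ℕ) := by
    have := legendreSym.eq_pow p (a + b : ℕ)
    rw [legendreSym_add_eq_χ₈_of_eq_sq_add_sq h (ha.add_even (hb.even (by decide))) hp4] at this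
    exact_mod_cast this.symm
  have hsum : (a : ZMod p) ^ 2 + (b : ZMod p) ^ 2 = 0 := by
    have : ((a ^ 2 + b ^ 2 : ℕ) : ZMod p) = 0 := by rw [← h]; exact ZMod.natCast_self p
    exact_mod_cast this
  set k := (p - 1) / 8
  have hprod : ((a : ZMod p) * b) ^ (2 * k) = (-1) ^ k := by
    rw [pow_mul, show ((a : ZMod p) * b) ^ 2 = -1 * (a : ZMod p) ^ 4 by
      linear_combination (a : ZMod p) ^ 2 * hsum, mul_pow, ← pow_mul, show 4 * k = p / 2 by omega,
      hA, mul_one]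
  have hpow : (2 : ZMod p) ^ (2 * k) * (-1) ^ k = χ₈ (a + b : ℕ) := by
    rw [← hprod, ← mul_pow, show 2 * ((a : ZMod p) * b) = (a + b) ^ 2 by linear_combination -hsum,
      ← pow_mul, show 2 * (2 * k) = p / 2 by omega, hAB]
  rw [show (p - 1) / 4 = 2 * k by omega, ← hpow, mul_assoc, ← pow_add, Even.neg_one_pow ⟨k, rfl⟩,
    mul_one]

end SumOfTwoSquares

theorem two_pow_div_four_eq_neg_one_pow {p a c : ℕ} [Fact p.Prime] (h : p = a ^ 2 + (4 * c) ^ 2)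
    (ha : Odd a) : (2 : ZMod p) ^ ((p - 1) / 4) = (-1) ^ c := by
  have hsign := χ₈_add_four_mul_mul_neg_one_pow ha c
  rw [← h] at hsign
  rw [two_pow_div_four_eq_χ₈_mul h ha (dvd_mul_right 4 c)]
  exact_mod_cast congrArg (Int.cast : ℤ → ZMod p) hsign

theorem Nat.Prime.exists_odd_eq_sq_add_sq_four_mul {p : ℕ} (hp : p.Prime) (h8 : p % 8 = 1) :
    ∃ a c : ℕ, Odd a ∧ p = a ^ 2 + (4 * c) ^ 2 := by
  have := Fact.mk hp
  obtain ⟨a, b, h⟩ := Nat.Prime.sq_add_sq (p := p) (by omega)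
  wlog ha : Odd a generalizing a b
  · have hp : Odd (a ^ 2 + b ^ 2) := by rw [h]; exact Nat.odd_iff.mpr (by omega)
    have hb : Odd b := (Nat.odd_pow_iff two_ne_zero).mp
      ((Nat.odd_add'.mp hp).mpr ((Nat.not_odd_iff_even.mp ha).pow_of_ne_zero two_ne_zero))
    exact this b a (by rw [← h, add_comm]) hb
  have ha8 := Nat.eight_dvd_sq_sub_one_of_odd ha
  have hpos : 1 ≤ a ^ 2 := Nat.one_le_pow _ _ ha.pos
  have hb8 : b ^ 2 % 8 = (b % 8) ^ 2 % 8 := Nat.pow_mod b 2 8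
  have hb : (b % 8) ^ 2 % 8 = 0 := by omega
  have hb4 : b % 8 % 4 = 0 := by
    have hr : b % 8 < 8 := Nat.mod_lt _ (by norm_num)
    generalize b % 8 = r at hr hb
    revert r
    decide
  exact ⟨a, b / 4, ha, by rw [← h, Nat.mul_div_cancel' (by omega)]⟩

theorem two_pow_div_four_eq_one_iff {p : ℕ} [hp : Fact p.Prime] (h1 : p % 4 = 1) :
    (2 : ZMod p) ^ ((p - 1) / 4) = 1 ↔ ∃ x y : ℕ, p = x ^ 2 + 64 * y ^ 2 := by
  have hp5 : 5 ≤ p := by have := hp.out.two_le; omega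
  constructor
  · intro h2pow
    have hsq : IsSquare (2 : ZMod p) := by
      rw [ZMod.euler_criterion p (Ring.two_ne_zero (by rw [ZMod.ringChar_zmod_n]; omega)),
        show p / 2 = (p - 1) / 4 * 2 by omega, pow_mul, h2pow, one_pow]
    have h8 : p % 8 = 1 := by
      have := (ZMod.exists_sq_eq_two_iff (by omega)).mp hsq
      omega
    obtain ⟨a, c, ha, hac⟩ := hp.out.exists_odd_eq_sq_add_sq_four_mul h8
    have : Fact (2 < p) := ⟨by omega⟩
    rw [two_pow_div_four_eq_neg_one_pow hac ha, neg_one_pow_eq_one_iff_even ZMod.neg_one_ne_one]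
      at h2pow
    obtain ⟨y, rfl⟩ := h2pow
    exact ⟨a, y, by rw [hac]; ring⟩
  · rintro ⟨x, y, hxy⟩
    have hodd : Odd (x ^ 2 + 64 * y ^ 2) := hxy ▸ hp.out.odd_of_ne_two (by omega)
    have hx : Odd x := (Nat.odd_pow_iff two_ne_zero).mp
      ((Nat.odd_add.mp hodd).mpr ((by decide : Even 64).mul_right _))
    rw [two_pow_div_four_eq_neg_one_pow (c := 2 * y) (by rw [hxy]; ring) hx, pow_mul, neg_one_sq,
      one_pow]

theorem gauss_biquadratic_two (p : ℕ) (hp : p.Prime) (h1 : p % 4 = 1) :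
    (∃ x : ℤ, x ^ 4 ≡ 2 [ZMOD p]) ↔ ∃ x y : ℕ, p = x ^ 2 + 64 * y ^ 2 := by
  have := Fact.mk hp
  have h2 : (2 : ZMod p) ≠ 0 :=
    Ring.two_ne_zero (by rw [ZMod.ringChar_zmod_n]; have := hp.two_le; omega)
  have h4 : 4 ∣ Fintype.card (ZMod p) - 1 := by rw [ZMod.card]; omega
  rw [exists_int_pow_modEq_iff, Int.cast_ofNat, FiniteField.exists_pow_eq_iff_pow_div_eq_one h4 h2,
    ZMod.card, two_pow_div_four_eq_one_iff h1]
end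

section
/- Let $G$ be a topological group with no small subgroups, i.e., there is an identity neighborhood $V$ containing no nontrivial subgroup. Let $U$ be a compact identity neighborhood. Then the set $K = \{\Gamma \in \mathrm{Sub}(G) : \Gamma \cap U = \{1\}\}$ is open in the Chabauty topology on the space $\mathrm{Sub}(G)$ of closed subgroups of $G$. -/
open TopologicalSpace

/-- The space of closed subgroups of a topological group `G`. -/
def ClosedSub (G : Type*) [Group G] [TopologicalSpace G] :=
  {H : Subgroup G // IsClosed (H : Set G)}

/-- The Chabauty topology on the space of closed subgroups: generated by the sets
`{H | H ∩ K = ∅}` for `K` compact and `{H | H ∩ U ≠ ∅}` for `U` open. -/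
def chabautyTopology (G : Type*) [Group G] [TopologicalSpace G] :
    TopologicalSpace (ClosedSub G) :=
  generateFrom
    ({S | ∃ K : Set G, IsCompact K ∧ S = {H : ClosedSub G | (H.1 : Set G) ∩ K = ∅}} ∪
     {S | ∃ U : Set G, IsOpen U ∧ S = {H : ClosedSub G | ((H.1 : Set G) ∩ U).Nonempty}})

/-!
Choose an open symmetric identity neighbourhood `W` with `W * W ⊆ U ∩ V`. A subgroup `Γ`
meeting `U` only inside `W` traps the powers of each of its elements `x ∈ U`: inductively
`x ^ (n + 1) = x ^ n * x ∈ (W * W) ∩ Γ ⊆ U ∩ Γ ⊆ W`. Hence `⟨x⟩ ⊆ W ⊆ V`, and no small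
subgroups forces `x = 1`. So `Γ ∩ U = {1}` is equivalent to `Γ ∩ (U \ W) = ∅`, a subbasic
Chabauty open condition because `U \ W` is compact.
-/

open scoped Pointwise

namespace Subgroup

variable {G : Type*} [Group G] {H : Subgroup G} {U V W : Set G}

theorem pow_mem_of_inter_subset (hW1 : (1 : G) ∈ W) (hWW : W * W ⊆ U)
    (hHU : (H : Set G) ∩ U ⊆ W) {x : G} (hxH : x ∈ H) (hxW : x ∈ W) :
    ∀ n : ℕ, x ^ n ∈ W
  | 0 => by simpa using hW1
  | n + 1 => hHU ⟨pow_mem hxH _,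
      pow_succ x n ▸ hWW (Set.mul_mem_mul (pow_mem_of_inter_subset hW1 hWW hHU hxH hxW n) hxW)⟩

theorem coe_zpowers_subset_of_pow_mem (hWinv : W⁻¹ = W) {x : G} (h : ∀ n : ℕ, x ^ n ∈ W) :
    (zpowers x : Set G) ⊆ W := by
  rintro _ ⟨k, rfl⟩
  rcases Int.eq_nat_or_neg k with ⟨n, rfl | rfl⟩
  · simpa using h n
  · rw [← hWinv]
    simpa using h n

theorem inter_eq_one_iff_inter_diff_eq_empty
    (hNSS : ∀ K : Subgroup G, (K : Set G) ⊆ V → K = ⊥)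
    (hWV : W ⊆ V) (hWinv : W⁻¹ = W) (hW1 : (1 : G) ∈ W) (hWW : W * W ⊆ U) :
    (H : Set G) ∩ U = {1} ↔ (H : Set G) ∩ (U \ W) = ∅ := by
  rw [← Set.inter_sdiff_assoc, Set.sdiff_eq_empty]
  constructor
  · intro h
    simpa [h] using hW1
  · intro hHU
    refine Set.Subset.antisymm (fun x ⟨hxH, hxU⟩ => ?_) ?_
    · have hpow := pow_mem_of_inter_subset hW1 hWW hHU hxH (hHU ⟨hxH, hxU⟩)
      exact zpowers_eq_bot.mp <| hNSS _ <| (coe_zpowers_subset_of_pow_mem hWinv hpow).trans hWV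
    · simpa using hWW (Set.mul_mem_mul hW1 hW1)

end Subgroup

theorem exists_isOpen_inv_eq_mul_subset {G : Type*} [Group G] [TopologicalSpace G]
    [IsTopologicalGroup G] {U : Set G} (hU : U ∈ nhds (1 : G)) :
    ∃ W : Set G, IsOpen W ∧ (1 : G) ∈ W ∧ W⁻¹ = W ∧ W * W ⊆ U := by
  obtain ⟨W, hWo, hW1, hWU⟩ := exists_open_nhds_one_mul_subset hU
  refine ⟨W ∩ W⁻¹, hWo.inter hWo.inv, ⟨hW1, by simpa using hW1⟩, ?_, ?_⟩
  · rw [Set.inter_inv, inv_inv, Set.inter_comm]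
  · exact (Set.mul_subset_mul Set.inter_subset_left Set.inter_subset_left).trans hWU

theorem chabautyTopology_isOpen_inter_eq_empty {G : Type*} [Group G] [TopologicalSpace G]
    {K : Set G} (hK : IsCompact K) :
    (chabautyTopology G).IsOpen {H : ClosedSub G | (H.1 : Set G) ∩ K = ∅} :=
  GenerateOpen.basic _ (Or.inl ⟨K, hK, rfl⟩)

/-- If `G` has no small subgroups and `U` is a compact identity neighborhood, then
`{Γ : Γ ∩ U = {1}}` is Chabauty open. -/
theorem chabauty_open_of_nss (G : Type*) [Group G] [TopologicalSpace G]
    [IsTopologicalGroup G]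
    (hNSS : ∃ V ∈ nhds (1 : G), ∀ H : Subgroup G, (H : Set G) ⊆ V → H = ⊥)
    (U : Set G) (hUc : IsCompact U) (hU : U ∈ nhds (1 : G)) :
    (chabautyTopology G).IsOpen
      {Γ : ClosedSub G | (Γ.1 : Set G) ∩ U = {1}} := by
  obtain ⟨V, hV, hVsmall⟩ := hNSS
  obtain ⟨W, hWo, hW1, hWinv, hWUV⟩ := exists_isOpen_inv_eq_mul_subset (Filter.inter_mem hU hV)
  have hWV : W ⊆ V := fun w hw => by simpa using (hWUV (Set.mul_mem_mul hw hW1)).2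
  have hset : {Γ : ClosedSub G | (Γ.1 : Set G) ∩ U = {1}} =
      {Γ : ClosedSub G | (Γ.1 : Set G) ∩ (U \ W) = ∅} :=
    Set.ext fun Γ => Subgroup.inter_eq_one_iff_inter_diff_eq_empty hVsmall hWV hWinv hW1
      (hWUV.trans Set.inter_subset_left)
  rw [hset]
  exact chabautyTopology_isOpen_inter_eq_empty (hUc.diff hWo)
end
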